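/- If λ ≤ 1, then the supremum of the density ratio is attained at x = 1: sup_{x ≥ 0} b(x)/π_λ(x) = b(1)/π_λ(1). -/

import Mathlib

/-!
Write `q i = p i / (1 - p i)`, so that `p i = q i / (1 + q i)`. Factoring out `∏' k, (1 - p k)`
gives `b(x) = ∏' k, (1 - p k) · e_x(q)`, where `e_x(q)` is the `x`-th elementary symmetric sum
of the `q i`, and the claim becomes `x! e_x(q) λ ≤ λ^x e_1(q)`. For `x = 0` this is `λ ≤ ∑ q i`.
For larger `x` it is the chain `(r + 2) e_{r+2}(q) ≤ λ e_{r+1}(q)`, proved on finite index sets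
by induction on `r` through `∑ i, q i e_r(q without i) = (r + 1) e_{r+1}(q)`. The base case
`2 e_2(q) ≤ (∑ p i)(∑ q i)` is where `λ ≤ 1` enters, together with Cauchy–Schwarz with the
weights `p i`.
-/

open scoped BigOperators

/-- Poisson probability mass function with parameter `l`. -/
noncomputable def poissonPMF (l : ℝ) (x : ℕ) : ℝ :=
  Real.exp (-l) * l ^ x / (Nat.factorial x)

/-- Poisson binomial probability mass function:
`b(x) = Σ_{J ⊆ ℕ, #J = x} ∏_{i ∈ J} p i · ∏_{k ∉ J} (1 - p k)`. -/
noncomputable def pb (p : ℕ → ℝ) (x : ℕ) : ℝ :=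
  ∑' J : {J : Finset ℕ // J.card = x},
    (∏ i ∈ (J : Finset ℕ), p i) * ∏' k : {k : ℕ // k ∉ (J : Finset ℕ)}, (1 - p k)

open Finset
open scoped Nat

namespace PoissonBinomial

variable {ι R : Type*}

section CommSemiring

variable [CommSemiring R] (q : ι → R)

def esymm (s : Finset ι) (r : ℕ) : R :=
  ∑ t ∈ s.powersetCard r, ∏ i ∈ t, q i

theorem esymm_zero (s : Finset ι) : esymm q s 0 = 1 := by
  simp [esymm]

theorem esymm_one (s : Finset ι) : esymm q s 1 = ∑ i ∈ s, q i := by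
  simp [esymm, powersetCard_one]

theorem mul_esymm_erase [DecidableEq ι] {s : Finset ι} {i : ι} (hi : i ∈ s) (r : ℕ) :
    q i * esymm q (s.erase i) r = ∑ t ∈ s.powersetCard (r + 1) with i ∈ t, ∏ j ∈ t, q j := by
  rw [esymm, mul_sum]
  refine sum_nbij' (insert i) (fun t => t.erase i) (fun t ht => ?_) (fun t ht => ?_)
    (fun t ht => ?_) (fun t ht => ?_) (fun t ht => ?_)
  all_goals simp only [mem_filter, mem_powersetCard] at ht ⊢
  · have hit : i ∉ t := fun h => notMem_erase i s (ht.1 h)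
    exact ⟨⟨insert_subset hi (ht.1.trans (erase_subset i s)),
      by rw [card_insert_of_notMem hit, ht.2]⟩, mem_insert_self i t⟩
  · exact ⟨erase_subset_erase i ht.1.1, by rw [card_erase_of_mem ht.2, ht.1.2, Nat.add_sub_cancel]⟩
  · exact erase_insert fun h => notMem_erase i s (ht.1 h)
  · exact insert_erase ht.2
  · rw [prod_insert fun h => notMem_erase i s (ht.1 h)]

/-- Each `(r + 1)`-subset `t` is counted once for each of its `r + 1` elements. -/
theorem sum_mul_esymm_erase [DecidableEq ι] (s : Finset ι) (r : ℕ) :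
    ∑ i ∈ s, q i * esymm q (s.erase i) r = (r + 1) * esymm q s (r + 1) := by
  rw [sum_congr rfl fun i hi => mul_esymm_erase q hi r,
    sum_comm' (t' := s.powersetCard (r + 1)) (s' := id), esymm, mul_sum]
  · refine sum_congr rfl fun t ht => ?_
    rw [id, sum_const, (mem_powersetCard.mp ht).2, nsmul_eq_mul]
    push_cast
    ring
  · simp only [mem_filter, mem_powersetCard, id]
    exact fun i t => ⟨fun ⟨_, h, hi⟩ => ⟨hi, h⟩, fun ⟨hi, h⟩ => ⟨h.1 hi, h, hi⟩⟩

variable [TopologicalSpace R]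

noncomputable def esymmTsum (r : ℕ) : R :=
  ∑' t : {t : Finset ι // t.card = r}, ∏ i ∈ (t : Finset ι), q i

theorem esymmTsum_zero : esymmTsum q 0 = 1 := by
  rw [esymmTsum, tsum_eq_single ⟨∅, card_empty⟩]
  · simp
  · exact fun t ht => absurd (Subtype.ext (card_eq_zero.mp t.2)) ht

theorem esymmTsum_one : esymmTsum q 1 = ∑' i, q i := by
  let e : ι ≃ {t : Finset ι // t.card = 1} :=
    Equiv.ofBijective (fun i => ⟨{i}, card_singleton i⟩)
      ⟨fun i j h => singleton_injective (congrArg Subtype.val h), fun t => by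
        obtain ⟨i, hi⟩ := card_eq_one.mp t.2
        exact ⟨i, Subtype.ext hi.symm⟩⟩
  rw [esymmTsum, ← e.tsum_eq]
  exact tsum_congr fun i => prod_singleton q i

end CommSemiring

theorem two_mul_esymm_two [CommRing R] [DecidableEq ι] (q : ι → R) (s : Finset ι) :
    2 * esymm q s 2 = (∑ i ∈ s, q i) ^ 2 - ∑ i ∈ s, q i ^ 2 := by
  have h := sum_mul_esymm_erase q s 1
  rw [sum_congr rfl fun i hi => by rw [esymm_one, sum_erase_eq_sub hi]] at h
  simp only [mul_sub, sum_sub_distrib, ← sum_mul] at h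
  norm_num at h
  simp only [← h, sq]

section Real

variable {q : ι → ℝ} {l : ℝ}

theorem esymm_nonneg (hq : ∀ i, 0 ≤ q i) (s : Finset ι) (r : ℕ) : 0 ≤ esymm q s r :=
  sum_nonneg fun _ _ => prod_nonneg fun i _ => hq i

variable [DecidableEq ι]

theorem esymmTsum_le_of_forall_esymm_le (hq : ∀ i, 0 ≤ q i) {r : ℕ} {c : ℝ}
    (h : ∀ s, esymm q s r ≤ c) : esymmTsum q r ≤ c := by
  refine tsum_le_of_sum_le' ((esymm_nonneg hq ∅ r).trans (h ∅)) fun u => ?_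
  calc ∑ t ∈ u, ∏ i ∈ (t : Finset ι), q i
      = ∑ t ∈ u.map (Function.Embedding.subtype _), ∏ i ∈ t, q i :=
        (sum_map u (Function.Embedding.subtype _) fun t => ∏ i ∈ t, q i).symm
    _ ≤ esymm q (u.sup Subtype.val) r := by
        refine sum_le_sum_of_subset_of_nonneg (fun t ht => ?_)
          fun t _ _ => prod_nonneg fun i _ => hq i
        obtain ⟨t, htu, rfl⟩ := mem_map.mp ht
        exact mem_powersetCard.mpr ⟨le_sup (f := Subtype.val) htu, t.2⟩
    _ ≤ c := h _

variable {s : Finset ι}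

theorem two_mul_esymm_two_le (hq : ∀ i, 0 ≤ q i) (hs : ∑ i ∈ s, q i / (1 + q i) ≤ 1) :
    2 * esymm q s 2 ≤ (∑ i ∈ s, q i / (1 + q i)) * ∑ i ∈ s, q i := by
  set w : ι → ℝ := fun i => q i / (1 + q i)
  have hw : ∀ i, 0 ≤ w i := fun i => div_nonneg (hq i) (by linarith [hq i])
  have hqw : ∀ i, q i = w i + w i * q i := fun i => by
    have : 1 + q i ≠ 0 := by linarith [hq i]
    simp only [w]
    field_simp
  have hT : 0 ≤ ∑ i ∈ s, w i * q i := sum_nonneg fun i _ => mul_nonneg (hw i) (hq i)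
  have hU : 0 ≤ ∑ i ∈ s, w i * q i ^ 2 :=
    sum_nonneg fun i _ => mul_nonneg (hw i) (sq_nonneg _)
  have hS : ∑ i ∈ s, q i = ∑ i ∈ s, w i + ∑ i ∈ s, w i * q i := by
    rw [← sum_add_distrib]
    exact sum_congr rfl fun i _ => hqw i
  have hsq : ∑ i ∈ s, q i ^ 2 = ∑ i ∈ s, w i * q i + ∑ i ∈ s, w i * q i ^ 2 := by
    rw [← sum_add_distrib]
    exact sum_congr rfl fun i _ => by nth_rw 1 [sq, hqw i]; ring
  have hCS : (∑ i ∈ s, w i * q i) ^ 2 ≤ (∑ i ∈ s, w i) * ∑ i ∈ s, w i * q i ^ 2 :=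
    sum_sq_le_sum_mul_sum_of_sq_le_mul s (fun i _ => hw i)
      (fun i _ => mul_nonneg (hw i) (sq_nonneg _)) fun i _ => (by ring : _ = _).le
  -- `(∑ q) T = (∑ w) T + T² ≤ T + (∑ w) U ≤ ∑ q²`, with `T = ∑ w q` and `U = ∑ w q²`
  rw [two_mul_esymm_two, hsq, hS]
  nlinarith [sum_nonneg fun i (_ : i ∈ s) => hw i]

theorem succ_mul_esymm_le (hq : ∀ i, 0 ≤ q i) (hs : ∑ i ∈ s, q i / (1 + q i) ≤ l) (hl : l ≤ 1)
    (r : ℕ) : (r + 2) * esymm q s (r + 2) ≤ l * esymm q s (r + 1) := by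
  induction r generalizing s with
  | zero =>
    have hw : 0 ≤ ∑ i ∈ s, q i := sum_nonneg fun i _ => hq i
    have := two_mul_esymm_two_le hq (hs.trans hl)
    rw [zero_add, esymm_one]
    push_cast
    nlinarith
  | succ r ih =>
    have hstep : ∀ i ∈ s, q i * ((r + 2) * esymm q (s.erase i) (r + 2)) ≤
        q i * (l * esymm q (s.erase i) (r + 1)) := fun i _ =>
      mul_le_mul_of_nonneg_left (ih (le_trans (sum_le_sum_of_subset_of_nonneg (erase_subset i s)
        fun j _ _ => div_nonneg (hq j) (by linarith [hq j])) hs)) (hq i)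
    have hsum := sum_le_sum hstep
    simp only [mul_left_comm (q _), ← mul_sum, sum_mul_esymm_erase] at hsum
    push_cast at hsum ⊢
    refine le_of_mul_le_mul_left ?_ (by positivity : (0 : ℝ) < r + 2)
    convert hsum using 1 <;> ring

theorem factorial_mul_esymm_le (hq : ∀ i, 0 ≤ q i) (hs : ∑ i ∈ s, q i / (1 + q i) ≤ l)
    (hl : l ≤ 1) (r : ℕ) : (r + 1)! * esymm q s (r + 1) ≤ l ^ r * ∑ i ∈ s, q i := by
  have hl0 : 0 ≤ l := (sum_nonneg fun i _ => div_nonneg (hq i) (by linarith [hq i])).trans hs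
  induction r with
  | zero => simp [esymm_one]
  | succ r ih =>
    calc ((r + 2)! : ℝ) * esymm q s (r + 2)
        = (r + 1)! * ((r + 2) * esymm q s (r + 2)) := by
          rw [Nat.factorial_succ]; push_cast; ring
      _ ≤ (r + 1)! * (l * esymm q s (r + 1)) :=
          mul_le_mul_of_nonneg_left (succ_mul_esymm_le hq hs hl r) (by positivity)
      _ ≤ l ^ (r + 1) * ∑ i ∈ s, q i := by
          rw [mul_left_comm, pow_succ', mul_assoc]
          exact mul_le_mul_of_nonneg_left ih hl0

theorem factorial_mul_esymmTsum_le (hq : ∀ i, 0 ≤ q i) (hqs : Summable q)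
    (hs : ∀ s : Finset ι, ∑ i ∈ s, q i / (1 + q i) ≤ l) (hl : l ≤ 1) (r : ℕ) :
    (r + 1)! * esymmTsum q (r + 1) ≤ l ^ r * ∑' i, q i := by
  have hl0 : 0 ≤ l := by simpa using hs ∅
  rw [← le_div_iff₀' (by positivity)]
  refine esymmTsum_le_of_forall_esymm_le hq fun s => ?_
  rw [le_div_iff₀' (by positivity)]
  exact (factorial_mul_esymm_le hq (hs s) hl r).trans
    (mul_le_mul_of_nonneg_left (hqs.sum_le_tsum s fun i _ => hq i) (pow_nonneg hl0 r))

theorem factorial_mul_esymmTsum_mul_le (hq : ∀ i, 0 ≤ q i) (hqs : Summable q)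
    (hs : ∀ s : Finset ι, ∑ i ∈ s, q i / (1 + q i) ≤ l) (hl : l ≤ 1) (hlq : l ≤ ∑' i, q i)
    (x : ℕ) :
    x ! * esymmTsum q x * l ≤ l ^ x * esymmTsum q 1 := by
  rw [esymmTsum_one]
  cases x with
  | zero => simpa [esymmTsum_zero] using hlq
  | succ r =>
    have hl0 : 0 ≤ l := by simpa using hs ∅
    calc (r + 1)! * esymmTsum q (r + 1) * l ≤ l ^ r * (∑' i, q i) * l :=
          mul_le_mul_of_nonneg_right (factorial_mul_esymmTsum_le hq hqs hs hl r) hl0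
      _ = l ^ (r + 1) * ∑' i, q i := by ring

end Real

theorem summable_div_one_sub {p : ι → ℝ} (hp : ∀ i, p i ∈ Set.Ico (0 : ℝ) 1) (hsum : Summable p) :
    Summable fun i => p i / (1 - p i) := by
  refine (hsum.mul_left 2).of_norm_bounded_eventually ?_
  filter_upwards [hsum.tendsto_cofinite_zero.eventually_le_const one_half_pos] with i hi
  have h1 : 0 < 1 - p i := by linarith [(hp i).2]
  rw [Real.norm_of_nonneg (div_nonneg (hp i).1 h1.le), div_le_iff₀ h1]
  nlinarith [(hp i).1]

theorem pb_eq_tprod_mul_esymmTsum {p : ℕ → ℝ} (hp : ∀ i, p i < 1) (hsum : Summable p) (x : ℕ) :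
    pb p x = (∏' k, (1 - p k)) * esymmTsum (fun i => p i / (1 - p i)) x := by
  rw [pb, esymmTsum, ← tsum_mul_left]
  refine tsum_congr fun J => ?_
  have hmul : ∀ t : Set ℕ, Multipliable fun k : t => 1 - p k := fun t => by
    have := Real.multipliable_one_add_of_summable (hsum.subtype (· ∈ t)).neg
    simpa only [Function.comp_apply, Pi.neg_apply, ← sub_eq_add_neg] using this
  have hpos : ∏ i ∈ (J : Finset ℕ), (1 - p i) ≠ 0 :=
    prod_ne_zero_iff.mpr fun i _ => by linarith [hp i]
  have hsplit := Multipliable.tprod_mul_tprod_compl (f := fun k => 1 - p k)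
    (s := ((J : Finset ℕ) : Set ℕ)) (hmul _) (hmul _)
  rw [Finset.tprod_subtype' (J : Finset ℕ) (fun k => 1 - p k)] at hsplit
  rw [← hsplit, prod_div_distrib]
  field_simp
  rfl

theorem mul_div_poissonPMF_le_mul_div_poissonPMF_one {l c a₁ aₓ : ℝ} {x : ℕ} (hl : 0 < l)
    (hc : 0 ≤ c) (h : x ! * aₓ * l ≤ l ^ x * a₁) :
    c * aₓ / poissonPMF l x ≤ c * a₁ / poissonPMF l 1 := by
  have hx : (0 : ℝ) < x ! := by positivity
  rw [poissonPMF, poissonPMF, div_le_div_iff₀ (by positivity) (by positivity)]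
  calc c * aₓ * (Real.exp (-l) * l ^ 1 / (1 : ℕ)!)
      = c * Real.exp (-l) / x ! * (x ! * aₓ * l) := by field_simp; simp
    _ ≤ c * Real.exp (-l) / x ! * (l ^ x * a₁) := by gcongr
    _ = c * a₁ * (Real.exp (-l) * l ^ x / x !) := by ring

end PoissonBinomial

/-- If `λ ≤ 1`, then the supremum of the density ratio is attained at `x = 1`:
`sup_x b(x)/π_λ(x) = b(1)/π_λ(1)`. -/
theorem stmt_18 (p : ℕ → ℝ) (hp : ∀ i, p i ∈ Set.Ico (0 : ℝ) 1) (hsum : Summable p)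
    (l : ℝ) (hl : l = ∑' i, p i) (hlpos : 0 < l) (hl1 : l ≤ 1) :
    (⨆ x : ℕ, pb p x / poissonPMF l x) = pb p 1 / poissonPMF l 1 := by
  have hp0 : ∀ i, 0 ≤ p i := fun i => (hp i).1
  have hp1 : ∀ i, p i < 1 := fun i => (hp i).2
  set q : ℕ → ℝ := fun i => p i / (1 - p i)
  have hqs : Summable q := PoissonBinomial.summable_div_one_sub hp hsum
  have hq : ∀ i, 0 ≤ q i := fun i => div_nonneg (hp0 i) (by linarith [hp1 i])
  have hqp : ∀ i, q i / (1 + q i) = p i := fun i => by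
    have : 1 - p i ≠ 0 := by linarith [hp1 i]
    simp only [q]
    field_simp
    ring
  have hlq : l ≤ ∑' i, q i :=
    hl ▸ hsum.tsum_le_tsum (fun i => le_div_self (hp0 i) (by linarith [hp1 i])
      (by linarith [hp0 i])) hqs
  have hratio : ∀ x, pb p x / poissonPMF l x ≤ pb p 1 / poissonPMF l 1 := fun x => by
    rw [PoissonBinomial.pb_eq_tprod_mul_esymmTsum hp1 hsum,
      PoissonBinomial.pb_eq_tprod_mul_esymmTsum hp1 hsum]
    refine PoissonBinomial.mul_div_poissonPMF_le_mul_div_poissonPMF_one hlpos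
      (tprod_nonneg fun k => by linarith [hp1 k]) ?_
    refine PoissonBinomial.factorial_mul_esymmTsum_mul_le hq hqs (fun s => ?_) hl1 hlq x
    simpa only [hqp, hl] using hsum.sum_le_tsum s fun i _ => hp0 i
  exact le_antisymm (ciSup_le hratio) (le_ciSup ⟨_, Set.forall_mem_range.2 hratio⟩ 1)
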